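/- Let V be a C*-pseudo-multiplicative unitary. Then Â_{V^{op}} = A_V* and A_{V^{op}} = Â_V*, where Â_V = [⟨β|₂ V |α⟩₂] and A_V = [⟨α|₁ V |β̂⟩₁] and V^{op} = Σ V* Σ. -/

import Mathlib

/-!
The flips `Σ` are isometries that carry the leg insertions of one relative tensor product to the
opposite legs of the other, so they cancel in `⟨β̂|₂ Σ V* Σ |α⟩₂ = ⟨β̂|₁ V* |α⟩₁ = (⟨α|₁ V |β̂⟩₁)*`:
the generators of `Â_{V^op}` are the adjoints of those of `A_V` (and likewise for the second
identity). Since `star` is a continuous conjugate-linear bijection, it commutes with closed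
linear spans.
-/

open ContinuousLinearMap

theorem star_image_closure_span {R A : Type*} [CommSemiring R] [StarRing R] [AddCommMonoid A]
    [StarAddMonoid A] [Module R A] [StarModule R A] [TopologicalSpace A] [ContinuousStar A]
    (S : Set A) :
    star '' closure (Submodule.span R S : Set A) = closure (Submodule.span R (star '' S)) :=
  ((starL R).image_closure _).trans <| congrArg (closure ∘ SetLike.coe)
    (Submodule.map_span (starLinearEquiv R (A := A)).toLinearMap S)

theorem setOf_exists_mem_eq_star_image {ι κ σ τ A : Type*} [Membership ι σ] [Membership κ τ]
    [Star A] {P : σ} {Q : τ} {f : ι → κ → A} {g : κ → ι → A}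
    (hfg : ∀ i j, f i j = star (g j i)) :
    {x | ∃ i ∈ P, ∃ j ∈ Q, x = f i j} = star '' {x | ∃ j ∈ Q, ∃ i ∈ P, x = g j i} := by
  ext x
  constructor
  · rintro ⟨i, hi, j, hj, rfl⟩
    exact ⟨g j i, ⟨j, hj, i, hi, rfl⟩, (hfg i j).symm⟩
  · rintro ⟨y, ⟨j, hj, i, hi, rfl⟩, rfl⟩
    exact ⟨i, hi, j, hj, (hfg i j).symm⟩

section Adjoint

variable {E F G K L : Type*}
  [NormedAddCommGroup E] [InnerProductSpace ℂ E] [CompleteSpace E]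
  [NormedAddCommGroup F] [InnerProductSpace ℂ F] [CompleteSpace F]
  [NormedAddCommGroup G] [InnerProductSpace ℂ G] [CompleteSpace G]
  [NormedAddCommGroup K] [InnerProductSpace ℂ K] [CompleteSpace K]
  [NormedAddCommGroup L] [InnerProductSpace ℂ L] [CompleteSpace L]

theorem adjoint_comp_conj_comp_of_isometry {U : F →L[ℂ] K} {W : G →L[ℂ] L}
    (hU : adjoint U ∘L U = ContinuousLinearMap.id ℂ F)
    (hW : adjoint W ∘L W = ContinuousLinearMap.id ℂ G) (T : F →L[ℂ] G) (a : E →L[ℂ] F)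
    (b : E →L[ℂ] G) :
    adjoint (W ∘L b) ∘L ((W ∘L T ∘L adjoint U) ∘L (U ∘L a)) = adjoint b ∘L T ∘L a := by
  simp only [adjoint_comp, comp_assoc]
  rw [← comp_assoc (adjoint U), hU, ← comp_assoc (adjoint W) W, hW, id_comp, id_comp]

theorem star_adjoint_comp_comp (a : E →L[ℂ] F) (T : G →L[ℂ] F) (b : E →L[ℂ] G) :
    star (adjoint a ∘L T ∘L b) = adjoint b ∘L adjoint T ∘L a := by
  rw [star_eq_adjoint, adjoint_comp, adjoint_comp, adjoint_adjoint, comp_assoc]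

end Adjoint

theorem stmt_8_general {𝔎 H Hs Hr Hs' Hr' : Type*}
    [NormedAddCommGroup 𝔎] [InnerProductSpace ℂ 𝔎]
    [NormedAddCommGroup H] [InnerProductSpace ℂ H] [CompleteSpace H]
    [NormedAddCommGroup Hs] [InnerProductSpace ℂ Hs] [CompleteSpace Hs]
    [NormedAddCommGroup Hr] [InnerProductSpace ℂ Hr] [CompleteSpace Hr]
    [NormedAddCommGroup Hs'] [InnerProductSpace ℂ Hs'] [CompleteSpace Hs']
    [NormedAddCommGroup Hr'] [InnerProductSpace ℂ Hr'] [CompleteSpace Hr']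
    -- the C*-(𝔟†,𝔟,𝔟†)-module structure (H, β̂, α, β)
    (α β βh : Submodule ℂ (𝔎 →L[ℂ] H))
    -- leg insertions on `Hs = H ⊗_{β̂,α} H`, `Hr = H ⊗_{α,β} H`,
    -- `Hs' = H ⊗_{β,α} H` and `Hr' = H ⊗_{α,β̂} H`
    (k1s k2s : (𝔎 →L[ℂ] H) →L[ℂ] (H →L[ℂ] Hs))
    (k1r k2r : (𝔎 →L[ℂ] H) →L[ℂ] (H →L[ℂ] Hr))
    (k1s' k2s' : (𝔎 →L[ℂ] H) →L[ℂ] (H →L[ℂ] Hs'))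
    (k1r' k2r' : (𝔎 →L[ℂ] H) →L[ℂ] (H →L[ℂ] Hr'))
    -- the unitary `V`
    (V : Hs →L[ℂ] Hr)
    -- the flips `Σ : H ⊗_{α,β} H → H ⊗_{β,α} H` and `Σ : H ⊗_{β̂,α} H → H ⊗_{α,β̂} H`
    (Sr : Hr →L[ℂ] Hs') (Ss : Hs →L[ℂ] Hr')
    (hSr₁ : adjoint Sr ∘L Sr = ContinuousLinearMap.id ℂ Hr)
    (hSs₁ : adjoint Ss ∘L Ss = ContinuousLinearMap.id ℂ Hs)
    (hSrk₁ : ∀ ξ, Sr ∘L k1r ξ = k2s' ξ) (hSrk₂ : ∀ ξ, Sr ∘L k2r ξ = k1s' ξ)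
    (hSsk₁ : ∀ ξ, Ss ∘L k1s ξ = k2r' ξ) (hSsk₂ : ∀ ξ, Ss ∘L k2s ξ = k1r' ξ)
    -- the opposite unitary `V^op = Σ V* Σ : H ⊗_{β,α} H → H ⊗_{α,β̂} H`
    (Vop : Hs' →L[ℂ] Hr')
    (hVop : Vop = Ss ∘L (adjoint V ∘L adjoint Sr)) :
    -- conclusion: Â_{V^op} = A_V* and A_{V^op} = Â_V*
    closure (Submodule.span ℂ
        {x : H →L[ℂ] H | ∃ η ∈ βh, ∃ ξ ∈ α,
          x = adjoint (k2r' η) ∘L (Vop ∘L k2s' ξ)} : Set (H →L[ℂ] H))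
      = star '' closure (Submodule.span ℂ
        {x : H →L[ℂ] H | ∃ ξ ∈ α, ∃ ζ ∈ βh,
          x = adjoint (k1r ξ) ∘L (V ∘L k1s ζ)} : Set (H →L[ℂ] H)) ∧
    closure (Submodule.span ℂ
        {x : H →L[ℂ] H | ∃ ξ ∈ α, ∃ η ∈ β,
          x = adjoint (k1r' ξ) ∘L (Vop ∘L k1s' η)} : Set (H →L[ℂ] H))
      = star '' closure (Submodule.span ℂ
        {x : H →L[ℂ] H | ∃ η ∈ β, ∃ ξ ∈ α,
          x = adjoint (k2r η) ∘L (V ∘L k2s ξ)} : Set (H →L[ℂ] H)) := by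
  have hflip {a : H →L[ℂ] Hr} {b : H →L[ℂ] Hs} {a' : H →L[ℂ] Hs'} {b' : H →L[ℂ] Hr'}
      (ha : Sr ∘L a = a') (hb : Ss ∘L b = b') :
      adjoint b' ∘L (Vop ∘L a') = star (adjoint a ∘L V ∘L b) := by
    rw [star_adjoint_comp_comp, ← ha, ← hb, hVop,
      adjoint_comp_conj_comp_of_isometry hSr₁ hSs₁]
  constructor
  · rw [star_image_closure_span,
      setOf_exists_mem_eq_star_image fun η ξ ↦ hflip (hSrk₁ ξ) (hSsk₁ η)]
  · rw [star_image_closure_span,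
      setOf_exists_mem_eq_star_image fun ξ η ↦ hflip (hSrk₂ η) (hSsk₂ ξ)]

set_option maxHeartbeats 1000000 in
theorem stmt_8 {𝔎 H Hs Hr Hs' Hr' : Type*}
    [NormedAddCommGroup 𝔎] [InnerProductSpace ℂ 𝔎] [CompleteSpace 𝔎]
    [NormedAddCommGroup H] [InnerProductSpace ℂ H] [CompleteSpace H]
    [NormedAddCommGroup Hs] [InnerProductSpace ℂ Hs] [CompleteSpace Hs]
    [NormedAddCommGroup Hr] [InnerProductSpace ℂ Hr] [CompleteSpace Hr]
    [NormedAddCommGroup Hs'] [InnerProductSpace ℂ Hs'] [CompleteSpace Hs']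
    [NormedAddCommGroup Hr'] [InnerProductSpace ℂ Hr'] [CompleteSpace Hr']
    -- the C*-(𝔟†,𝔟,𝔟†)-module structure (H, β̂, α, β)
    (α β βh : Submodule ℂ (𝔎 →L[ℂ] H))
    -- leg insertions on `Hs = H ⊗_{β̂,α} H`, `Hr = H ⊗_{α,β} H`,
    -- `Hs' = H ⊗_{β,α} H` and `Hr' = H ⊗_{α,β̂} H`
    (k1s k2s : (𝔎 →L[ℂ] H) →L[ℂ] (H →L[ℂ] Hs))
    (k1r k2r : (𝔎 →L[ℂ] H) →L[ℂ] (H →L[ℂ] Hr))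
    (k1s' k2s' : (𝔎 →L[ℂ] H) →L[ℂ] (H →L[ℂ] Hs'))
    (k1r' k2r' : (𝔎 →L[ℂ] H) →L[ℂ] (H →L[ℂ] Hr'))
    -- the unitary `V`
    (V : Hs →L[ℂ] Hr)
    (hVu₁ : adjoint V ∘L V = ContinuousLinearMap.id ℂ Hs)
    (hVu₂ : V ∘L adjoint V = ContinuousLinearMap.id ℂ Hr)
    -- the intertwining relations: V(α◁α) = α▷α
    (hint1 : closure (Submodule.span ℂ
        {x : 𝔎 →L[ℂ] Hr | ∃ η ∈ α, ∃ ξ ∈ α, x = V ∘L (k2s η ∘L ξ)} : Set (𝔎 →L[ℂ] Hr))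
      = closure (Submodule.span ℂ
        {x : 𝔎 →L[ℂ] Hr | ∃ ξ ∈ α, ∃ η ∈ α, x = k1r ξ ∘L η} : Set (𝔎 →L[ℂ] Hr)))
    -- V(β̂▷β) = β̂◁β
    (hint2 : closure (Submodule.span ℂ
        {x : 𝔎 →L[ℂ] Hr | ∃ ζ ∈ βh, ∃ η ∈ β, x = V ∘L (k1s ζ ∘L η)} : Set (𝔎 →L[ℂ] Hr))
      = closure (Submodule.span ℂ
        {x : 𝔎 →L[ℂ] Hr | ∃ η ∈ β, ∃ ζ ∈ βh, x = k2r η ∘L ζ} : Set (𝔎 →L[ℂ] Hr)))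
    -- V(β̂▷β̂) = α▷β̂
    (hint3 : closure (Submodule.span ℂ
        {x : 𝔎 →L[ℂ] Hr | ∃ ζ ∈ βh, ∃ ζ' ∈ βh, x = V ∘L (k1s ζ ∘L ζ')} : Set (𝔎 →L[ℂ] Hr))
      = closure (Submodule.span ℂ
        {x : 𝔎 →L[ℂ] Hr | ∃ ξ ∈ α, ∃ ζ ∈ βh, x = k1r ξ ∘L ζ} : Set (𝔎 →L[ℂ] Hr)))
    -- V(β◁α) = β◁β
    (hint4 : closure (Submodule.span ℂ
        {x : 𝔎 →L[ℂ] Hr | ∃ ξ ∈ α, ∃ η ∈ β, x = V ∘L (k2s ξ ∘L η)} : Set (𝔎 →L[ℂ] Hr))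
      = closure (Submodule.span ℂ
        {x : 𝔎 →L[ℂ] Hr | ∃ η' ∈ β, ∃ η ∈ β, x = k2r η' ∘L η} : Set (𝔎 →L[ℂ] Hr)))
    -- the flips `Σ : H ⊗_{α,β} H → H ⊗_{β,α} H` and `Σ : H ⊗_{β̂,α} H → H ⊗_{α,β̂} H`
    (Sr : Hr →L[ℂ] Hs') (Ss : Hs →L[ℂ] Hr')
    (hSr₁ : adjoint Sr ∘L Sr = ContinuousLinearMap.id ℂ Hr)
    (hSr₂ : Sr ∘L adjoint Sr = ContinuousLinearMap.id ℂ Hs')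
    (hSs₁ : adjoint Ss ∘L Ss = ContinuousLinearMap.id ℂ Hs)
    (hSs₂ : Ss ∘L adjoint Ss = ContinuousLinearMap.id ℂ Hr')
    (hSrk₁ : ∀ ξ, Sr ∘L k1r ξ = k2s' ξ) (hSrk₂ : ∀ ξ, Sr ∘L k2r ξ = k1s' ξ)
    (hSsk₁ : ∀ ξ, Ss ∘L k1s ξ = k2r' ξ) (hSsk₂ : ∀ ξ, Ss ∘L k2s ξ = k1r' ξ)
    -- the opposite unitary `V^op = Σ V* Σ : H ⊗_{β,α} H → H ⊗_{α,β̂} H`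
    (Vop : Hs' →L[ℂ] Hr')
    (hVop : Vop = Ss ∘L (adjoint V ∘L adjoint Sr)) :
    -- conclusion: Â_{V^op} = A_V* and A_{V^op} = Â_V*
    closure (Submodule.span ℂ
        {x : H →L[ℂ] H | ∃ η ∈ βh, ∃ ξ ∈ α,
          x = adjoint (k2r' η) ∘L (Vop ∘L k2s' ξ)} : Set (H →L[ℂ] H))
      = star '' closure (Submodule.span ℂ
        {x : H →L[ℂ] H | ∃ ξ ∈ α, ∃ ζ ∈ βh,
          x = adjoint (k1r ξ) ∘L (V ∘L k1s ζ)} : Set (H →L[ℂ] H)) ∧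
    closure (Submodule.span ℂ
        {x : H →L[ℂ] H | ∃ ξ ∈ α, ∃ η ∈ β,
          x = adjoint (k1r' ξ) ∘L (Vop ∘L k1s' η)} : Set (H →L[ℂ] H))
      = star '' closure (Submodule.span ℂ
        {x : H →L[ℂ] H | ∃ η ∈ β, ∃ ξ ∈ α,
          x = adjoint (k2r η) ∘L (V ∘L k2s ξ)} : Set (H →L[ℂ] H)) :=
  stmt_8_general α β βh k1s k2s k1r k2r k1s' k2s' k1r' k2r' V Sr Ss hSr₁ hSs₁ hSrk₁ hSrk₂ hSsk₁
    hSsk₂ Vop hVop
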